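/- arXiv:1409.3600 — 7 statements merged into one kernel-verified Lean document; each statement's English description precedes it below -/
import Mathlib

section
/- (Lemma 1, recurrence for the repeated step algorithm with groups of 3.) Let T : ℕ → ℝ be nonnegative and monotone nondecreasing, and suppose there exist a constant C > 0 and a threshold n₀ ∈ ℕ such that T(n) ≤ T(⌈n/9⌉) + T(⌈7n/9⌉) + C·n for all n ≥ n₀. Then there exists a constant D > 0 such that T(n) ≤ D·n for all n ≥ 1. -/
/-- Lemma 1: recurrence for the repeated step algorithm with groups of 3. -/
theorem repeated_step3_linear (T : ℕ → ℝ) (hT0 : ∀ n, 0 ≤ T n) (hTmono : Monotone T)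
    (C : ℝ) (hC : 0 < C) (n₀ : ℕ)
    (hrec : ∀ n : ℕ, n₀ ≤ n →
      T n ≤ T ⌈(1/9 : ℝ) * n⌉₊ + T ⌈(7/9 : ℝ) * n⌉₊ + C * n) :
    ∃ D : ℝ, 0 < D ∧ ∀ n : ℕ, 1 ≤ n → T n ≤ D * n := by
  set N : ℕ := max n₀ 36 with hNdef
  set D : ℝ := max (18 * C) (T N + 1) with hDdef
  have hD18 : 18 * C ≤ D := le_max_left _ _
  have hDTN : T N + 1 ≤ D := le_max_right _ _
  have hDpos : 0 < D := lt_of_lt_of_le (by linarith) hD18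
  refine ⟨D, hDpos, ?_⟩
  intro n
  induction n using Nat.strong_induction_on with
  | _ n ih =>
    intro hn
    by_cases hle : n ≤ N
    · have h1 : T n ≤ T N := hTmono hle
      have h2 : (1 : ℝ) ≤ (n : ℝ) := by exact_mod_cast hn
      have := hT0 N
      nlinarith
    · push_neg at hle
      have hn0 : n₀ ≤ n := le_trans (le_trans (le_max_left _ _) hle.le) (le_refl n)
      have h36 : 36 ≤ n := le_trans (le_max_right n₀ 36) hle.le
      have hnr : (36 : ℝ) ≤ (n : ℝ) := by exact_mod_cast h36
      set a := ⌈(1/9 : ℝ) * n⌉₊ with ha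
      set b := ⌈(7/9 : ℝ) * n⌉₊ with hb
      have hnpos : (0 : ℝ) < (n : ℝ) := by linarith
      have ha1 : (a : ℝ) < (1/9) * n + 1 := Nat.ceil_lt_add_one (by positivity)
      have hb1 : (b : ℝ) < (7/9) * n + 1 := Nat.ceil_lt_add_one (by positivity)
      have hapos : 1 ≤ a := Nat.one_le_iff_ne_zero.mpr (by
        have : 0 < a := Nat.ceil_pos.mpr (by positivity)
        omega)
      have hbpos : 1 ≤ b := Nat.one_le_iff_ne_zero.mpr (by
        have : 0 < b := Nat.ceil_pos.mpr (by positivity)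
        omega)
      have haltn : a < n := by
        have : (a : ℝ) < (n : ℝ) := by linarith
        exact_mod_cast this
      have hbltn : b < n := by
        have : (b : ℝ) < (n : ℝ) := by linarith
        exact_mod_cast this
      have iha := ih a haltn hapos
      have ihb := ih b hbltn hbpos
      have hrecn := hrec n hn0
      have har : (a : ℝ) ≤ (1/9) * n + 1 := ha1.le
      have hbr : (b : ℝ) ≤ (7/9) * n + 1 := hb1.le
      have hDa : T a ≤ D * ((1/9) * n + 1) := le_trans iha (by nlinarith)
      have hDb : T b ≤ D * ((7/9) * n + 1) := le_trans ihb (by nlinarith)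
      have key : D * ((1/9) * n + 1) + D * ((7/9) * n + 1) + C * n ≤ D * n := by
        nlinarith
      linarith
end

section
/- (Lemma 2, three-iteration recurrence for the shifting target algorithm with groups of 4.) Let T : ℕ → ℝ be nonnegative and monotone nondecreasing, and suppose there exist a constant C > 0 and a threshold n₀ ∈ ℕ such that T(n) ≤ T(⌈n/4⌉) + T(⌈3n/16⌉) + T(⌈9n/64⌉) + T(⌈45n/128⌉) + C·n for all n ≥ n₀. Then there exists a constant D > 0 such that T(n) ≤ D·n for all n ≥ 1. -/
/-- Lemma 2: three-iteration recurrence for the shifting target algorithm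
with groups of 4. -/
theorem shifting_target_linear (T : ℕ → ℝ) (hT0 : ∀ n, 0 ≤ T n)
    (hTmono : Monotone T) (C : ℝ) (hC : 0 < C) (n₀ : ℕ)
    (hrec : ∀ n : ℕ, n₀ ≤ n →
      T n ≤ T ⌈(1/4 : ℝ) * n⌉₊ + T ⌈(3/16 : ℝ) * n⌉₊ + T ⌈(9/64 : ℝ) * n⌉₊
            + T ⌈(45/128 : ℝ) * n⌉₊ + C * n) :
    ∃ D : ℝ, 0 < D ∧ ∀ n : ℕ, 1 ≤ n → T n ≤ D * n := by
  set N := max n₀ 128 with hNdef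
  obtain ⟨D, hDdef⟩ : ∃ D : ℝ, D = 128 * C / 5 + T N + 1 := ⟨_, rfl⟩
  have hTN : 0 ≤ T N := hT0 N
  have hDpos : 0 < D := by rw [hDdef]; positivity
  refine ⟨D, hDpos, ?_⟩
  intro n
  induction n using Nat.strong_induction_on with
  | _ n ih =>
    intro hn
    by_cases hcase : n ≤ N
    · have h1 : T n ≤ T N := hTmono hcase
      have h2 : (1:ℝ) ≤ (n:ℝ) := by exact_mod_cast hn
      nlinarith [hT0 n, mul_le_mul_of_nonneg_left h2 hDpos.le]
    · push_neg at hcase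
      have hn0 : n₀ ≤ n := le_trans (le_max_left _ _) hcase.le
      have h128 : (128:ℕ) ≤ n := le_trans (le_max_right _ _) hcase.le
      have hnR : (128:ℝ) ≤ (n:ℝ) := by exact_mod_cast h128
      have key : ∀ a : ℝ, 0 < a → a ≤ 45/128 → T ⌈a * n⌉₊ ≤ D * (a * n + 1) := by
        intro a ha ha'
        have hpos : 0 < a * (n:ℝ) := by positivity
        have hk1 : 1 ≤ ⌈a * (n:ℝ)⌉₊ := Nat.one_le_iff_ne_zero.mpr
          (by simpa using (Nat.ceil_pos.mpr hpos).ne')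
        have hkn : ⌈a * (n:ℝ)⌉₊ < n := by
          have h : a * (n:ℝ) ≤ ((n - 1 : ℕ) : ℝ) := by
            have : ((n - 1 : ℕ) : ℝ) = (n:ℝ) - 1 := by
              have : 1 ≤ n := by omega
              push_cast [Nat.cast_sub this]; ring
            rw [this]; nlinarith
          have := Nat.ceil_le.mpr h
          omega
        have hih := ih _ hkn hk1
        have hceil : (⌈a * (n:ℝ)⌉₊ : ℝ) < a * n + 1 := Nat.ceil_lt_add_one hpos.le
        calc T ⌈a * (n:ℝ)⌉₊ ≤ D * ⌈a * (n:ℝ)⌉₊ := hih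
          _ ≤ D * (a * n + 1) := by nlinarith
      have k1 := key (1/4) (by norm_num) (by norm_num)
      have k2 := key (3/16) (by norm_num) (by norm_num)
      have k3 := key (9/64) (by norm_num) (by norm_num)
      have k4 := key (45/128) (by norm_num) (by norm_num)
      have hr := hrec n hn0
      have hDC : 128 * C / 5 ≤ D := by nlinarith
      nlinarith [mul_le_mul_of_nonneg_left hnR hDpos.le,
        mul_le_mul_of_nonneg_right hDC (show (0:ℝ) ≤ (n:ℝ) by positivity)]
end

section
/- (Recurrence for the repeated step algorithm with groups of 4.) Let T : ℕ → ℝ be nonnegative and monotone nondecreasing, and suppose there exist a constant C > 0 and a threshold n₀ ∈ ℕ such that T(n) ≤ T(⌈n/16⌉) + T(⌈7n/8⌉) + C·n for all n ≥ n₀. Then there exists a constant D > 0 such that T(n) ≤ D·n for all n ≥ 1. -/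
/-- Recurrence for the repeated step algorithm with groups of 4. -/
theorem repeated_step4_linear (T : ℕ → ℝ) (hT0 : ∀ n, 0 ≤ T n) (hTmono : Monotone T)
    (C : ℝ) (hC : 0 < C) (n₀ : ℕ)
    (hrec : ∀ n : ℕ, n₀ ≤ n →
      T n ≤ T ⌈(1/16 : ℝ) * n⌉₊ + T ⌈(7/8 : ℝ) * n⌉₊ + C * n) :
    ∃ D : ℝ, 0 < D ∧ ∀ n : ℕ, 1 ≤ n → T n ≤ D * n := by
  set N := max n₀ 64 with hN
  have hTN : 0 ≤ T N := hT0 N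
  set D := 32 * C + T N + 1 with hD
  have hD0 : 0 < D := by positivity
  have hD32 : 32 * C ≤ D := by linarith
  refine ⟨D, hD0, ?_⟩
  intro n hn
  induction n using Nat.strong_induction_on with
  | _ n ih =>
    by_cases h : n ≤ N
    · have h1 : T n ≤ T N := hTmono h
      have h2 : (1 : ℝ) ≤ (n : ℝ) := by exact_mod_cast hn
      calc T n ≤ T N := h1
        _ ≤ D := by linarith
        _ = D * 1 := by ring
        _ ≤ D * n := by nlinarith
    · push_neg at h
      have hn65 : 65 ≤ n := by omega
      have hnR : (65 : ℝ) ≤ (n : ℝ) := by exact_mod_cast hn65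
      have hrec' := hrec n (by omega)
      set a := ⌈(1/16 : ℝ) * n⌉₊ with ha
      set b := ⌈(7/8 : ℝ) * n⌉₊ with hb
      have ha1 : 1 ≤ a := by
        rw [ha]
        exact Nat.one_le_iff_ne_zero.mpr (by
          have : 0 < ⌈(1/16 : ℝ) * n⌉₊ := Nat.ceil_pos.mpr (by positivity)
          omega)
      have hb1 : 1 ≤ b := by
        rw [hb]
        exact Nat.one_le_iff_ne_zero.mpr (by
          have : 0 < ⌈(7/8 : ℝ) * n⌉₊ := Nat.ceil_pos.mpr (by positivity)
          omega)
      have haln : a < n := by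
        have : a ≤ n - 1 := Nat.ceil_le.mpr (by
          have : ((n - 1 : ℕ) : ℝ) = (n : ℝ) - 1 := by
            push_cast [Nat.cast_sub (by omega : 1 ≤ n)]; ring
          rw [this]; linarith)
        omega
      have hbln : b < n := by
        have : b ≤ n - 1 := Nat.ceil_le.mpr (by
          have : ((n - 1 : ℕ) : ℝ) = (n : ℝ) - 1 := by
            push_cast [Nat.cast_sub (by omega : 1 ≤ n)]; ring
          rw [this]; linarith)
        omega
      have haR : (a : ℝ) ≤ (1/16 : ℝ) * n + 1 :=
        (Nat.ceil_lt_add_one (by positivity)).le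
      have hbR : (b : ℝ) ≤ (7/8 : ℝ) * n + 1 :=
        (Nat.ceil_lt_add_one (by positivity)).le
      have iha : T a ≤ D * a := ih a haln ha1
      have ihb : T b ≤ D * b := ih b hbln hb1
      have ha' : D * (a : ℝ) ≤ D * ((1/16 : ℝ) * n + 1) :=
        mul_le_mul_of_nonneg_left haR hD0.le
      have hb' : D * (b : ℝ) ≤ D * ((7/8 : ℝ) * n + 1) :=
        mul_le_mul_of_nonneg_left hbR hD0.le
      nlinarith [mul_le_mul_of_nonneg_right hD32 (by linarith : (0:ℝ) ≤ (n:ℝ) - 64)]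
end

section
/- (Recurrence for the combined repeated-step/alternating-median algorithm with groups of 4.) Let T : ℕ → ℝ be nonnegative and monotone nondecreasing, and suppose there exist a constant C > 0 and a threshold n₀ ∈ ℕ such that T(n) ≤ T(⌈n/16⌉) + T(⌈13n/16⌉) + C·n for all n ≥ n₀. Then there exists a constant D > 0 such that T(n) ≤ D·n for all n ≥ 1. -/
/-- Recurrence for the combined repeated-step/alternating-median algorithm with groups of 4. -/
theorem combined4_linear (T : ℕ → ℝ) (hT0 : ∀ n, 0 ≤ T n) (hTmono : Monotone T)
    (C : ℝ) (hC : 0 < C) (n₀ : ℕ)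
    (hrec : ∀ n : ℕ, n₀ ≤ n →
      T n ≤ T ⌈(1/16 : ℝ) * n⌉₊ + T ⌈(13/16 : ℝ) * n⌉₊ + C * n) :
    ∃ D : ℝ, 0 < D ∧ ∀ n : ℕ, 1 ≤ n → T n ≤ D * n := by
  set N := max n₀ 32 with hN
  have hTN := hT0 N
  refine ⟨16*C + T N + 1, by positivity, ?_⟩
  set D := 16*C + T N + 1 with hD
  have hD16 : 16*C ≤ D := by simp only [hD]; linarith
  have hDTN : T N ≤ D := by simp only [hD]; linarith
  have hDpos : 0 < D := by positivity
  intro n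
  induction n using Nat.strong_induction_on with
  | _ n ih =>
    intro hn1
    by_cases hnN : n < N
    · calc T n ≤ T N := hTmono (le_of_lt hnN)
        _ ≤ D := hDTN
        _ ≤ D * n := le_mul_of_one_le_right hDpos.le (by exact_mod_cast hn1)
    · push_neg at hnN
      have h32 : (32:ℕ) ≤ n := le_trans (le_max_right _ _) hnN
      have hn0 : n₀ ≤ n := le_trans (le_max_left _ _) hnN
      have hnR : (32:ℝ) ≤ n := by exact_mod_cast h32
      have hx1 : (0:ℝ) ≤ (1/16)*n := by positivity
      have hx2 : (0:ℝ) ≤ (13/16)*n := by positivity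
      have hc1 : (⌈(1/16:ℝ)*n⌉₊ : ℝ) < (1/16)*n + 1 := Nat.ceil_lt_add_one hx1
      have hc2 : (⌈(13/16:ℝ)*n⌉₊ : ℝ) < (13/16)*n + 1 := Nat.ceil_lt_add_one hx2
      have hm1 : ⌈(1/16:ℝ)*n⌉₊ < n := by
        have : ((⌈(1/16:ℝ)*n⌉₊ : ℝ)) < (n:ℝ) := by linarith
        exact_mod_cast this
      have hm2 : ⌈(13/16:ℝ)*n⌉₊ < n := by
        have : ((⌈(13/16:ℝ)*n⌉₊ : ℝ)) < (n:ℝ) := by linarith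
        exact_mod_cast this
      have h1le : 1 ≤ ⌈(1/16:ℝ)*n⌉₊ := Nat.ceil_pos.mpr (by linarith)
      have h2le : 1 ≤ ⌈(13/16:ℝ)*n⌉₊ := Nat.ceil_pos.mpr (by linarith)
      have ih1 := ih _ hm1 h1le
      have ih2 := ih _ hm2 h2le
      have hrecn := hrec n hn0
      nlinarith [mul_le_mul_of_nonneg_left hc1.le hDpos.le,
        mul_le_mul_of_nonneg_left hc2.le hDpos.le,
        mul_nonneg (sub_nonneg.mpr hD16) (by linarith : (0:ℝ) ≤ n),
        mul_nonneg hDpos.le (sub_nonneg.mpr hnR)]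
end

section
/- (Recurrence (1): upper bound for SELECT with groups of 4.) Let T : ℕ → ℝ be nonnegative and monotone nondecreasing, and suppose there exist a constant C > 0 and a threshold n₀ ∈ ℕ, n₀ ≥ 2, such that T(n) ≤ T(⌈n/4⌉) + T(⌈3n/4⌉) + C·n for all n ≥ n₀. Then T(n) = O(n log n), i.e., there exists a constant D > 0 such that T(n) ≤ D·n·log n for all n ≥ 2. -/
lemma log54_ge : (1/5 : ℝ) ≤ Real.log (5/4) := by
  rw [Real.le_log_iff_exp_le (by norm_num)]
  have h := Real.add_one_le_exp (-(1/5 : ℝ))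
  have h2 : Real.exp (-(1/5:ℝ)) = (Real.exp (1/5))⁻¹ := Real.exp_neg _
  have h3 : 0 < Real.exp (1/5 : ℝ) := Real.exp_pos _
  rw [h2] at h
  rw [inv_eq_one_div] at h
  have h4 : (4/5 : ℝ) * Real.exp (1/5) ≤ 1 := (le_div_iff₀ h3).mp (by linarith)
  linarith

lemma log_le_of_big {x : ℝ} (hx : (10000:ℝ) ≤ x) : Real.log x ≤ x / 50 := by
  have hx0 : (0:ℝ) < x := by linarith
  have h1 : Real.log (Real.sqrt x) ≤ Real.sqrt x - 1 :=
    Real.log_le_sub_one_of_pos (Real.sqrt_pos.mpr hx0)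
  have h2 : Real.log (Real.sqrt x) = Real.log x / 2 := Real.log_sqrt hx0.le
  have h3 : Real.sqrt x ≤ x / 100 := by
    rw [Real.sqrt_le_left (by linarith)]
    nlinarith
  linarith

set_option maxHeartbeats 1000000 in
/-- Recurrence (1): upper bound for SELECT with groups of 4. -/
theorem select4_nlogn (T : ℕ → ℝ) (hT0 : ∀ n, 0 ≤ T n) (hTmono : Monotone T)
    (C : ℝ) (hC : 0 < C) (n₀ : ℕ) (hn₀ : 2 ≤ n₀)
    (hrec : ∀ n : ℕ, n₀ ≤ n →
      T n ≤ T ⌈(1/4 : ℝ) * n⌉₊ + T ⌈(3/4 : ℝ) * n⌉₊ + C * n) :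
    ∃ D : ℝ, 0 < D ∧ ∀ n : ℕ, 2 ≤ n → T n ≤ D * n * Real.log n := by
  set N : ℕ := max n₀ 10000 with hN
  clear_value N
  have hN2 : (10000:ℕ) ≤ N := hN ▸ le_max_right _ _
  have hNn0 : n₀ ≤ N := hN ▸ le_max_left _ _
  have hlog2 : (1/5 : ℝ) ≤ Real.log 2 := by
    calc (1/5:ℝ) ≤ Real.log (5/4) := log54_ge
    _ ≤ Real.log 2 := Real.log_le_log (by norm_num) (by norm_num)
  have hlog2pos : (0:ℝ) < Real.log 2 := by linarith
  set D : ℝ := 7 * C + T N / Real.log 2 + 1 with hD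
  clear_value D
  have hTN : 0 ≤ T N := hT0 N
  have hDiv : 0 ≤ T N / Real.log 2 := div_nonneg hTN hlog2pos.le
  have hDpos : 0 < D := by rw [hD]; positivity
  have hD7C : 7 * C ≤ D := by rw [hD]; linarith
  refine ⟨D, hDpos, ?_⟩
  intro n
  induction n using Nat.strong_induction_on with
  | _ n IH =>
    intro hn2
    have hlogn2 : Real.log 2 ≤ Real.log n := by
      apply Real.log_le_log (by norm_num)
      exact_mod_cast hn2
    by_cases hnN : n < N
    · -- base case
      have h1 : T n ≤ T N := hTmono hnN.le
      have h2 : T N ≤ D * 2 * Real.log 2 := by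
        have hdm : T N / Real.log 2 * Real.log 2 = T N := div_mul_cancel₀ _ hlog2pos.ne'
        rw [hD]
        nlinarith
      have h3 : D * 2 * Real.log 2 ≤ D * n * Real.log n := by
        have hn2' : (2:ℝ) ≤ (n:ℝ) := by exact_mod_cast hn2
        have hmm : 2 * Real.log 2 ≤ (n:ℝ) * Real.log n :=
          mul_le_mul hn2' hlogn2 hlog2pos.le (by linarith)
        nlinarith [hDpos.le]
      linarith
    · -- inductive step
      push_neg at hnN
      have hnR : (10000:ℝ) ≤ (n:ℝ) := by exact_mod_cast le_trans hN2 hnN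
      set a : ℕ := ⌈(1/4 : ℝ) * n⌉₊ with ha
      set b : ℕ := ⌈(3/4 : ℝ) * n⌉₊ with hb
      have haR : (a:ℝ) < (1/4:ℝ) * n + 1 := Nat.ceil_lt_add_one (by positivity)
      have hbR : (b:ℝ) < (3/4:ℝ) * n + 1 := Nat.ceil_lt_add_one (by positivity)
      have ha2 : 2 ≤ a := by
        have : (1:ℕ) < a := Nat.lt_ceil.mpr (by push_cast; nlinarith)
        omega
      have hb2 : 2 ≤ b := by
        have : (1:ℕ) < b := Nat.lt_ceil.mpr (by push_cast; nlinarith)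
        omega
      have han : a < n := by
        have : a ≤ n - 1 := Nat.ceil_le.mpr (by push_cast [Nat.cast_sub (by omega : 1 ≤ n)]; nlinarith)
        omega
      have hbn : b < n := by
        have : b ≤ n - 1 := Nat.ceil_le.mpr (by push_cast [Nat.cast_sub (by omega : 1 ≤ n)]; nlinarith)
        omega
      clear_value a b
      have hIa := IH a han (by omega)
      have hIb := IH b hbn (by omega)
      have haf : (a:ℝ) ≤ (4/5:ℝ) * n := by linarith
      have hbf : (b:ℝ) ≤ (4/5:ℝ) * n := by linarith
      have hbpos : (0:ℝ) < (b:ℝ) := by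
        have : (0:ℕ) < b := by omega
        exact_mod_cast this
      have hapos' : (0:ℝ) < (a:ℝ) := by
        have : (0:ℕ) < a := by omega
        exact_mod_cast this
      have hnpos : (0:ℝ) < (n:ℝ) := by linarith
      have hlog45 : Real.log ((4/5:ℝ) * n) = Real.log n - Real.log (5/4) := by
        rw [Real.log_mul (by norm_num) hnpos.ne']
        have : Real.log (4/5 : ℝ) = - Real.log (5/4) := by
          rw [show (4/5:ℝ) = (5/4)⁻¹ by norm_num, Real.log_inv]
        rw [this]; ring
      have hloga : Real.log a ≤ Real.log n - 1/5 := by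
        have h1 : Real.log a ≤ Real.log ((4/5:ℝ) * n) := Real.log_le_log hapos' haf
        have := log54_ge
        rw [hlog45] at h1; linarith
      have hlogb : Real.log b ≤ Real.log n - 1/5 := by
        have h1 : Real.log b ≤ Real.log ((4/5:ℝ) * n) := Real.log_le_log hbpos hbf
        have := log54_ge
        rw [hlog45] at h1; linarith
      have hrecn := hrec n (le_trans hNn0 hnN)
      rw [← ha, ← hb] at hrecn
      -- combine
      have hL5 : (1/5:ℝ) ≤ Real.log n := by linarith
      have hab : (a:ℝ) + b ≤ n + 2 := by linarith
      have hlogle : Real.log n ≤ (n:ℝ) / 50 := log_le_of_big hnR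
      have hTa : T a ≤ D * a * (Real.log n - 1/5) := by
        calc T a ≤ D * a * Real.log a := hIa
        _ ≤ D * a * (Real.log n - 1/5) := by
            apply mul_le_mul_of_nonneg_left hloga (by positivity : (0:ℝ) ≤ D * a)
      have hTb : T b ≤ D * b * (Real.log n - 1/5) := by
        calc T b ≤ D * b * Real.log b := hIb
        _ ≤ D * b * (Real.log n - 1/5) := by
            apply mul_le_mul_of_nonneg_left hlogb (by positivity : (0:ℝ) ≤ D * b)
      have key : D * a * (Real.log n - 1/5) + D * b * (Real.log n - 1/5) + C * n
          ≤ D * n * Real.log n := by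
        have h1 : D * a * (Real.log n - 1/5) + D * b * (Real.log n - 1/5)
            ≤ D * ((n:ℝ) + 2) * (Real.log n - 1/5) := by
          have h0 : (0:ℝ) ≤ Real.log n - 1/5 := by linarith
          nlinarith [mul_le_mul_of_nonneg_left hab (mul_nonneg hDpos.le h0)]
        have h2 : C * n ≤ D / 7 * n := by
          rw [div_mul_eq_mul_div, le_div_iff₀ (by norm_num : (0:ℝ) < 7)]
          nlinarith
        nlinarith [hDpos.le, hnpos.le]
      linarith
end

section
/- (Pivot quality for SELECT with groups of 5.) Let j ∈ ℕ and k = 2j + 1. Let S be a finite set of 5k distinct real numbers partitioned into k pairwise disjoint groups G₁, …, G_k of 5 elements each, let mᵢ be the median (3rd smallest element) of Gᵢ, and let m be the median ((j+1)-th smallest element) of the set M = {m₁, …, m_k}. Then |{x ∈ S : x ≤ m}| ≥ 3(j+1) and |{x ∈ S : x ≥ m}| ≥ 3(j+1). In particular, at least 3·|S|/10 elements of S are ≥ m and at least 3·|S|/10 are ≤ m, so at least 3|S|/10 elements can be discarded when partitioning around m. -/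
/-- The `j`-th smallest element (0-indexed) of a finite set of reals. -/
noncomputable def kthSmallest (s : Finset ℝ) (j : ℕ) : ℝ :=
  (s.sort (· ≤ ·)).getD j 0

lemma kthSmallest_eq_getElem (s : Finset ℝ) (p : ℕ) (hp : p < (s.sort (· ≤ ·)).length) :
    kthSmallest s p = (s.sort (· ≤ ·))[p] :=
  List.getD_eq_getElem _ 0 hp

lemma kthSmallest_mem (s : Finset ℝ) (p : ℕ) (hp : p < s.card) : kthSmallest s p ∈ s := by
  have hl : p < (s.sort (· ≤ ·)).length := by rwa [Finset.length_sort]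
  rw [kthSmallest_eq_getElem s p hl, ← Finset.mem_sort (α := ℝ) (· ≤ ·)]
  exact List.getElem_mem hl

lemma kth_count_le (s : Finset ℝ) (p : ℕ) (hp : p < s.card) :
    p + 1 ≤ (s.filter (fun x => x ≤ kthSmallest s p)).card := by
  classical
  set l := s.sort (· ≤ ·) with hl
  have hlen : l.length = s.card := Finset.length_sort _
  have hplen : p < l.length := by omega
  have hmaps : ∀ i ∈ Finset.range (p + 1),
      l.getD i 0 ∈ s.filter (fun x => x ≤ kthSmallest s p) := by
    intro i hi
    have hi' : i < l.length := by
      have := Finset.mem_range.mp hi; omega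
    rw [List.getD_eq_getElem l 0 hi']
    refine Finset.mem_filter.mpr ⟨?_, ?_⟩
    · rw [← Finset.mem_sort (α := ℝ) (· ≤ ·)]
      exact List.getElem_mem hi'
    · rw [kthSmallest_eq_getElem s p hplen]
      exact (s.pairwise_sort (· ≤ ·)).rel_get_of_le
        (by simpa using Nat.lt_succ_iff.mp (Finset.mem_range.mp hi))
  have hinj : Set.InjOn (fun i => l.getD i 0) (Finset.range (p + 1)) := by
    intro a ha b hb hab
    have ha' : a < l.length := by
      have := Finset.mem_range.mp (Finset.mem_coe.mp ha); omega
    have hb' : b < l.length := by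
      have := Finset.mem_range.mp (Finset.mem_coe.mp hb); omega
    have hab' : l.getD a 0 = l.getD b 0 := hab
    rw [List.getD_eq_getElem l 0 ha', List.getD_eq_getElem l 0 hb'] at hab'
    exact (s.sort_nodup (· ≤ ·)).getElem_inj_iff.mp hab'
  have := Finset.card_le_card_of_injOn _ hmaps hinj
  simpa using this

lemma kth_count_ge (s : Finset ℝ) (p : ℕ) (hp : p < s.card) :
    s.card - p ≤ (s.filter (fun x => kthSmallest s p ≤ x)).card := by
  classical
  set l := s.sort (· ≤ ·) with hl
  have hlen : l.length = s.card := Finset.length_sort _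
  have hplen : p < l.length := by omega
  have hmaps : ∀ i ∈ Finset.range (s.card - p),
      l.getD (p + i) 0 ∈ s.filter (fun x => kthSmallest s p ≤ x) := by
    intro i hi
    have hi' : p + i < l.length := by
      have := Finset.mem_range.mp hi; omega
    rw [List.getD_eq_getElem l 0 hi']
    refine Finset.mem_filter.mpr ⟨?_, ?_⟩
    · rw [← Finset.mem_sort (α := ℝ) (· ≤ ·)]
      exact List.getElem_mem hi'
    · rw [kthSmallest_eq_getElem s p hplen]
      exact (s.pairwise_sort (· ≤ ·)).rel_get_of_le (by simp)
  have hinj : Set.InjOn (fun i => l.getD (p + i) 0) (Finset.range (s.card - p)) := by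
    intro a ha b hb hab
    have ha' : p + a < l.length := by
      have := Finset.mem_range.mp (Finset.mem_coe.mp ha); omega
    have hb' : p + b < l.length := by
      have := Finset.mem_range.mp (Finset.mem_coe.mp hb); omega
    have hab' : l.getD (p + a) 0 = l.getD (p + b) 0 := hab
    rw [List.getD_eq_getElem l 0 ha', List.getD_eq_getElem l 0 hb'] at hab'
    have := (s.sort_nodup (· ≤ ·)).getElem_inj_iff.mp hab'
    omega
  have := Finset.card_le_card_of_injOn _ hmaps hinj
  simpa using this

/-- Pivot quality for SELECT with groups of 5: the median `m` of the `k = 2j+1`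
group medians is `≤` at least `3(j+1)` elements of `S` and `≥` at least
`3(j+1)` elements of `S`. -/
theorem pivot_quality_group5 (j : ℕ) (k : ℕ) (hk : k = 2 * j + 1)
    (S : Finset ℝ) (hS : S.card = 5 * k)
    (G : Fin k → Finset ℝ)
    (hdisj : ∀ i i' : Fin k, i ≠ i' → Disjoint (G i) (G i'))
    (hunion : Finset.univ.biUnion G = S)
    (hcard : ∀ i, (G i).card = 5)
    (M : Finset ℝ) (hM : M = Finset.image (fun i => kthSmallest (G i) 2) Finset.univ)
    (m : ℝ) (hm : m = kthSmallest M j) :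
    3 * (j + 1) ≤ (S.filter (fun x => x ≤ m)).card ∧
    3 * (j + 1) ≤ (S.filter (fun x => m ≤ x)).card := by
  classical
  set med : Fin k → ℝ := fun i => kthSmallest (G i) 2 with hmed
  have hmedmem : ∀ i, med i ∈ G i := fun i =>
    kthSmallest_mem (G i) 2 (by rw [hcard i]; omega)
  have hGS : ∀ i, G i ⊆ S := by
    intro i x hx
    rw [← hunion]
    exact Finset.mem_biUnion.mpr ⟨i, Finset.mem_univ i, hx⟩
  have hmedinj : Function.Injective med := by
    intro a b hab
    by_contra hne
    exact (Finset.disjoint_left.mp (hdisj a b hne)) (hmedmem a) (hab ▸ hmedmem b)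
  have hMcard : M.card = k := by
    rw [hM, Finset.card_image_of_injective _ hmedinj, Finset.card_univ, Fintype.card_fin]
  have hjM : j < M.card := by omega
  -- counting indices whose median is ≤ m (resp. ≥ m)
  have key : ∀ (P : ℝ → Prop) [DecidablePred P],
      (M.filter P).card = (Finset.univ.filter (fun i => P (med i))).card := by
    intro P _
    rw [hM, Finset.filter_image]
    exact Finset.card_image_of_injective _ hmedinj
  -- main counting argument, symmetric in the two directions
  have main : ∀ (Q : ℝ → ℝ → Prop) [DecidableRel Q],
      (∀ a b c : ℝ, Q a b → Q b c → Q a c) →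
      (∀ i, 3 ≤ ((G i).filter (fun x => Q x (med i))).card) →
      j + 1 ≤ (M.filter (fun x => Q x m)).card →
      3 * (j + 1) ≤ (S.filter (fun x => Q x m)).card := by
    intro Q _ htrans hgrp hMcount
    set I : Finset (Fin k) := Finset.univ.filter (fun i => Q (med i) m) with hI
    have hIcard : j + 1 ≤ I.card :=
      le_trans hMcount (le_of_eq (key (fun x => Q x m)))
    set T : Finset ℝ := I.biUnion (fun i => (G i).filter (fun x => Q x (med i))) with hT
    have hTsub : T ⊆ S.filter (fun x => Q x m) := by
      intro x hx
      obtain ⟨i, hiI, hxi⟩ := Finset.mem_biUnion.mp hx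
      obtain ⟨hxG, hxQ⟩ := Finset.mem_filter.mp hxi
      have hiQ : Q (med i) m := (Finset.mem_filter.mp hiI).2
      exact Finset.mem_filter.mpr ⟨hGS i hxG, htrans _ _ _ hxQ hiQ⟩
    have hTcard : 3 * (j + 1) ≤ T.card := by
      rw [hT, Finset.card_biUnion]
      · calc 3 * (j + 1) ≤ 3 * I.card := by omega
          _ = ∑ _i ∈ I, 3 := by rw [Finset.sum_const, smul_eq_mul, mul_comm]
          _ ≤ ∑ i ∈ I, ((G i).filter (fun x => Q x (med i))).card :=
              Finset.sum_le_sum (fun i _ => hgrp i)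
      · intro a _ b _ hne
        exact (hdisj a b hne).mono (Finset.filter_subset _ _) (Finset.filter_subset _ _)
    exact le_trans hTcard (Finset.card_le_card hTsub)
  constructor
  · refine main (· ≤ ·) (fun a b c => le_trans) (fun i => ?_) ?_
    · have := kth_count_le (G i) 2 (by rw [hcard i]; omega)
      simpa using this
    · rw [hm]
      exact kth_count_le M j hjM
  · refine main (fun a b => b ≤ a) (fun a b c h1 h2 => le_trans h2 h1) (fun i => ?_) ?_
    · have := kth_count_ge (G i) 2 (by rw [hcard i]; omega)
      rw [hcard i] at this
      simpa using this
    · rw [hm]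
      refine le_trans ?_ (kth_count_ge M j hjM)
      omega
end

section
/- (Pivot quality with lower medians of groups of 4.) Let j ∈ ℕ and k = 2j + 1. Let S be a finite set of 4k distinct real numbers partitioned into k pairwise disjoint groups G₁, …, G_k of 4 elements each, let mᵢ be the lower median (2nd smallest element) of Gᵢ, and let m be the median ((j+1)-th smallest element) of the set M = {m₁, …, m_k}. Then |{x ∈ S : x ≤ m}| ≥ 2(j+1) and |{x ∈ S : x ≥ m}| ≥ 3(j+1). In particular, at least |S|/4 elements of S are ≤ m and at least 3·|S|/8 elements of S are ≥ m. -/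
open Finset Function

lemma kthSmallest_eq_orderEmbOfFin {s : Finset ℝ} {j : ℕ} (hj : j < #s) :
    kthSmallest s j = s.orderEmbOfFin rfl ⟨j, hj⟩ := by
  rw [orderEmbOfFin_apply, kthSmallest, List.getD_eq_getElem _ _ (by simpa using hj)]
  rfl

lemma kthSmallest_mem_s12 {s : Finset ℝ} {j : ℕ} (hj : j < #s) : kthSmallest s j ∈ s := by
  rw [kthSmallest_eq_orderEmbOfFin hj]
  exact orderEmbOfFin_mem ..

lemma succ_le_card_filter_le_kthSmallest {s : Finset ℝ} {j : ℕ} (hj : j < #s) :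
    j + 1 ≤ #(s.filter (· ≤ kthSmallest s j)) := by
  rw [kthSmallest_eq_orderEmbOfFin hj]
  set e := s.orderEmbOfFin rfl
  calc j + 1 = #((Iic (⟨j, hj⟩ : Fin #s)).map e.toEmbedding) := by simp
    _ ≤ _ := card_le_card fun x hx => by
      obtain ⟨i, hi, rfl⟩ := mem_map.mp hx
      exact mem_filter.mpr ⟨orderEmbOfFin_mem .., e.monotone (mem_Iic.mp hi)⟩

lemma card_sub_le_card_filter_kthSmallest_le {s : Finset ℝ} {j : ℕ} (hj : j < #s) :
    #s - j ≤ #(s.filter (kthSmallest s j ≤ ·)) := by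
  rw [kthSmallest_eq_orderEmbOfFin hj]
  set e := s.orderEmbOfFin rfl
  calc #s - j = #((Ici (⟨j, hj⟩ : Fin #s)).map e.toEmbedding) := by simp
    _ ≤ _ := card_le_card fun x hx => by
      obtain ⟨i, hi, rfl⟩ := mem_map.mp hx
      exact mem_filter.mpr ⟨orderEmbOfFin_mem .., e.monotone (mem_Ici.mp hi)⟩

lemma card_filter_image_le {ι α : Type*} [DecidableEq α] (s : Finset ι) (f : ι → α)
    (p : α → Prop) [DecidablePred p] :
    #((s.image f).filter p) ≤ #(s.filter fun i => p (f i)) := by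
  rw [filter_image]
  exact card_image_le

lemma mul_card_le_card_filter_biUnion {ι α : Type*} [Fintype ι] [DecidableEq α]
    {G : ι → Finset α} (hG : Pairwise (Disjoint on G)) {p : α → Prop} [DecidablePred p]
    {T : Finset ι} {c : ℕ} (hT : ∀ i ∈ T, c ≤ #((G i).filter p)) :
    c * #T ≤ #((univ.biUnion G).filter p) :=
  calc c * #T = ∑ _ ∈ T, c := by rw [sum_const, smul_eq_mul, mul_comm]
    _ ≤ ∑ i ∈ T, #((G i).filter p) := sum_le_sum hT
    _ = #((T.biUnion G).filter p) := by
      rw [filter_biUnion, card_biUnion (t := fun i => (G i).filter p)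
        (Set.PairwiseDisjoint.mono (hG.set_pairwise _) fun i => filter_subset _ _)]
    _ ≤ _ := card_le_card (monotone_filter_left _ (biUnion_subset_biUnion_of_subset_left _
      (subset_univ T)))

theorem pivot_quality_group4_lower_general (j : ℕ) (k : ℕ) (hk : k = 2 * j + 1)
    (S : Finset ℝ)
    (G : Fin k → Finset ℝ)
    (hdisj : ∀ i i' : Fin k, i ≠ i' → Disjoint (G i) (G i'))
    (hunion : Finset.univ.biUnion G = S)
    (hcard : ∀ i, (G i).card = 4)
    (M : Finset ℝ) (hM : M = Finset.image (fun i => kthSmallest (G i) 1) Finset.univ)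
    (m : ℝ) (hm : m = kthSmallest M j) :
    2 * (j + 1) ≤ (S.filter (fun x => x ≤ m)).card ∧
    3 * (j + 1) ≤ (S.filter (fun x => m ≤ x)).card := by
  classical
  set f := fun i => kthSmallest (G i) 1
  have hf_mem : ∀ i, f i ∈ G i := fun i => kthSmallest_mem_s12 (by simp [hcard])
  have hf_inj : f.Injective := fun i i' h => by_contra fun hne =>
    disjoint_left.mp (hdisj i i' hne) (hf_mem i) (h ▸ hf_mem i')
  have hMcard : #M = 2 * j + 1 := by
    rw [hM, card_image_of_injective _ hf_inj, card_univ, Fintype.card_fin, hk]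
  have hjM : j < #M := by omega
  have hlow_medians : j + 1 ≤ #(univ.filter fun i => f i ≤ m) :=
    hm ▸ (succ_le_card_filter_le_kthSmallest hjM).trans (hM ▸ card_filter_image_le ..)
  have hhigh_medians : j + 1 ≤ #(univ.filter fun i => m ≤ f i) :=
    hm ▸ (by omega : j + 1 ≤ #M - j).trans
      ((card_sub_le_card_filter_kthSmallest_le hjM).trans (hM ▸ card_filter_image_le ..))
  have hlow_group : ∀ i, f i ≤ m → 2 ≤ #((G i).filter (· ≤ m)) := fun i hi =>
    (succ_le_card_filter_le_kthSmallest (by simp [hcard])).trans <|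
      card_le_card <| monotone_filter_right _ fun _ _ hx => hx.trans hi
  have hhigh_group : ∀ i, m ≤ f i → 3 ≤ #((G i).filter (m ≤ ·)) := fun i hi =>
    (hcard i ▸ card_sub_le_card_filter_kthSmallest_le (s := G i) (j := 1)
      (by simp [hcard])).trans <|
      card_le_card <| monotone_filter_right _ fun _ _ hx => hi.trans hx
  subst hunion
  exact ⟨(Nat.mul_le_mul_left 2 hlow_medians).trans <| mul_card_le_card_filter_biUnion hdisj
      fun i hi => hlow_group i (mem_filter.mp hi).2,
    (Nat.mul_le_mul_left 3 hhigh_medians).trans <| mul_card_le_card_filter_biUnion hdisj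
      fun i hi => hhigh_group i (mem_filter.mp hi).2⟩

/-- Pivot quality with lower medians of groups of 4: the median `m` of the
`k = 2j+1` lower medians is `≤` at least `2(j+1)` elements of `S` and `≥` at
least `3(j+1)` elements of `S`. -/
theorem pivot_quality_group4_lower (j : ℕ) (k : ℕ) (hk : k = 2 * j + 1)
    (S : Finset ℝ) (hS : S.card = 4 * k)
    (G : Fin k → Finset ℝ)
    (hdisj : ∀ i i' : Fin k, i ≠ i' → Disjoint (G i) (G i'))
    (hunion : Finset.univ.biUnion G = S)
    (hcard : ∀ i, (G i).card = 4)
    (M : Finset ℝ) (hM : M = Finset.image (fun i => kthSmallest (G i) 1) Finset.univ)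
    (m : ℝ) (hm : m = kthSmallest M j) :
    2 * (j + 1) ≤ (S.filter (fun x => x ≤ m)).card ∧
    3 * (j + 1) ≤ (S.filter (fun x => m ≤ x)).card :=
  pivot_quality_group4_lower_general j k hk S G hdisj hunion hcard M hM m hm
end
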